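/- arXiv:1704.08540 — 5 statements merged into one kernel-verified Lean document; each statement's English description precedes it below -/
import Mathlib

section
/- Let S be a set of states, A a set of actions, step : S → A → S → Prop a labelled transition relation, and I a symmetric relation on A such that whenever I a b, for all states s, s1, s2, if step s a s1 and step s1 b s2 then there exists s1' with step s b s1' and step s1' a s2. Let ≡ be the smallest equivalence relation on List A closed under u ++ [a,b] ++ v ≡ u ++ [b,a] ++ v for all a, b with I a b. Then for any words w ≡ w' and any states s, t, the word w can be executed from s ending in t (i.e., there is a sequence of steps through the letters of w) if and only if w' can be executed from s ending in t. -/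
inductive MEquiv {A : Type*} (I : A → A → Prop) : List A → List A → Prop
  | refl (w : List A) : MEquiv I w w
  | symm {w w'} : MEquiv I w w' → MEquiv I w' w
  | trans {w w' w''} : MEquiv I w w' → MEquiv I w' w'' → MEquiv I w w''
  | swap (u v : List A) (a b : A) : I a b →
      MEquiv I (u ++ [a, b] ++ v) (u ++ [b, a] ++ v)

inductive Exec {S A : Type*} (step : S → A → S → Prop) : S → List A → S → Prop
  | nil (s : S) : Exec step s [] s
  | cons {s s' t : S} {a : A} {w : List A} :
      step s a s' → Exec step s' w t → Exec step s (a :: w) t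

/-! Executions split along concatenation, so rewriting an infix of a word acts on executions
through the executions of that infix alone; for a swap of independent letters the diamond
property rewrites the two-step execution, and induction on `MEquiv` finishes. -/

namespace Exec

variable {S A : Type*} {step : S → A → S → Prop}

theorem append_iff {s t : S} {u v : List A} :
    Exec step s (u ++ v) t ↔ ∃ m, Exec step s u m ∧ Exec step m v t := by
  induction u generalizing s with
  | nil =>
    refine ⟨fun h => ⟨s, nil s, h⟩, ?_⟩
    rintro ⟨m, ⟨⟩, h⟩
    exact h
  | cons a u ih =>
    constructor
    · rintro (_ | ⟨hstep, hrest⟩)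
      obtain ⟨m, hu, hv⟩ := ih.mp hrest
      exact ⟨m, cons hstep hu, hv⟩
    · rintro ⟨m, _ | ⟨hstep, hu⟩, hv⟩
      exact cons hstep (ih.mpr ⟨m, hu, hv⟩)

theorem append_append_of_imp {x y : List A}
    (hxy : ∀ s t, Exec step s x t → Exec step s y t) {s t : S} (u v : List A) :
    Exec step s (u ++ x ++ v) t → Exec step s (u ++ y ++ v) t := by
  simp only [append_iff]
  rintro ⟨m, ⟨m', hu, hx⟩, hv⟩
  exact ⟨m, ⟨m', hu, hxy _ _ hx⟩, hv⟩

theorem pair_iff {s t : S} {a b : A} :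
    Exec step s [a, b] t ↔ ∃ m, step s a m ∧ step m b t := by
  constructor
  · rintro (_ | ⟨ha, _ | ⟨hb, ⟨⟩⟩⟩)
    exact ⟨_, ha, hb⟩
  · rintro ⟨m, ha, hb⟩
    exact cons ha (cons hb (nil t))

theorem swap_of_diamond {a b : A}
    (hdiamond : ∀ s s1 s2, step s a s1 → step s1 b s2 → ∃ s1', step s b s1' ∧ step s1' a s2)
    {s t : S} (h : Exec step s [a, b] t) : Exec step s [b, a] t := by
  obtain ⟨m, ha, hb⟩ := pair_iff.mp h
  exact pair_iff.mpr (hdiamond s m t ha hb)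

end Exec

theorem mequiv_exec_iff {S A : Type*} (step : S → A → S → Prop) (I : A → A → Prop)
    (hsymm : ∀ a b, I a b → I b a)
    (hdiamond : ∀ a b, I a b → ∀ s s1 s2, step s a s1 → step s1 b s2 →
      ∃ s1', step s b s1' ∧ step s1' a s2)
    {w w' : List A} (h : MEquiv I w w') (s t : S) :
    Exec step s w t ↔ Exec step s w' t := by
  induction h generalizing s t with
  | refl w => rfl
  | symm _ ih => exact (ih s t).symm
  | trans _ _ ih₁ ih₂ => exact (ih₁ s t).trans (ih₂ s t)
  | swap u v a b hab =>
    exact ⟨Exec.append_append_of_imp (fun _ _ => Exec.swap_of_diamond (hdiamond a b hab)) u v,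
      Exec.append_append_of_imp
        (fun _ _ => Exec.swap_of_diamond (hdiamond b a (hsymm a b hab))) u v⟩
end

section
/- Let A be a type, I : A → A → Prop symmetric, and ≡ the Mazurkiewicz equivalence on List A generated by swapping adjacent independent letters. For any two letters a, b with ¬ I a b and ¬ I b a, and any words w ≡ w', the sublist of w consisting of all occurrences of letters belonging to {a, b} (taken in order) is equal to the corresponding sublist of w'. In other words, the projection onto any pair of mutually dependent letters is invariant under ≡. -/
theorem List.filter_pair_swap {A : Type*} (p : A → Bool) {c d : A}
    (h : p c → p d → c = d) : [c, d].filter p = [d, c].filter p := by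
  by_cases hc : p c <;> by_cases hd : p d <;> simp [List.filter, hc, hd, h]

theorem MEquiv.filter_eq {A : Type*} {I : A → A → Prop} (p : A → Bool)
    (hp : ∀ c d, I c d → p c → p d → c = d) {w w' : List A} (h : MEquiv I w w') :
    w.filter p = w'.filter p := by
  induction h with
  | refl w => rfl
  | symm _ ih => exact ih.symm
  | trans _ _ ih₁ ih₂ => exact ih₁.trans ih₂
  | swap u v c d hcd =>
    simp only [List.filter_append, List.filter_pair_swap p (hp c d hcd)]

theorem mequiv_proj_pair_invariant_general {A : Type*} [DecidableEq A] (I : A → A → Prop)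
    (a b : A) (hab : ¬ I a b) (hba : ¬ I b a)
    {w w' : List A} (h : MEquiv I w w') :
    w.filter (fun x => decide (x = a ∨ x = b)) =
      w'.filter (fun x => decide (x = a ∨ x = b)) := by
  refine h.filter_eq _ fun c d hcd hc hd => ?_
  simp only [decide_eq_true_eq] at hc hd
  rcases hc with rfl | rfl <;> rcases hd with rfl | rfl <;> first | rfl | contradiction

theorem mequiv_proj_pair_invariant {A : Type*} [DecidableEq A] (I : A → A → Prop)
    (hsymm : ∀ a b, I a b → I b a)
    (a b : A) (hab : ¬ I a b) (hba : ¬ I b a)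
    {w w' : List A} (h : MEquiv I w w') :
    w.filter (fun x => decide (x = a ∨ x = b)) =
      w'.filter (fun x => decide (x = a ∨ x = b)) :=
  mequiv_proj_pair_invariant_general I a b hab hba h
end

section
/- Let A be a type equipped with a linear order, I : A → A → Prop a symmetric relation, and ≡ the Mazurkiewicz equivalence on List A generated by swapping adjacent independent letters. Then every ≡-equivalence class contains a unique element that is minimal for the lexicographic order on List A: i.e., for every word w there exists w₀ ≡ w such that w₀ ≤lex w' for all w' ≡ w, and any two such minimal elements are equal. -/
namespace MEquiv

variable {A : Type*} {I : A → A → Prop}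

theorem perm {w w' : List A} (h : MEquiv I w w') : w.Perm w' := by
  induction h with
  | refl w => exact .refl w
  | symm _ ih => exact ih.symm
  | trans _ _ ih₁ ih₂ => exact ih₁.trans ih₂
  | swap u v a b _ => exact ((List.Perm.swap b a []).append_left u).append_right v

theorem setOf_finite (I : A → A → Prop) (w : List A) : {w' | MEquiv I w w'}.Finite :=
  (List.finite_toSet w.permutations).subset fun _ h =>
    List.mem_permutations.2 (perm h).symm

end MEquiv

theorem mequiv_exists_unique_lex_min_general {A : Type*} [LinearOrder A] (I : A → A → Prop)
    (w : List A) :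
    ∃ w₀ : List A, (MEquiv I w w₀ ∧ ∀ w', MEquiv I w w' → w₀ ≤ w') ∧
      ∀ w₁ : List A, (MEquiv I w w₁ ∧ ∀ w', MEquiv I w w' → w₁ ≤ w') → w₁ = w₀ := by
  obtain ⟨w₀, hw₀, hmin⟩ :=
    Set.exists_min_image _ id (MEquiv.setOf_finite I w) ⟨w, MEquiv.refl w⟩
  have hleast : IsLeast {w' | MEquiv I w w'} w₀ := ⟨hw₀, hmin⟩
  exact ⟨w₀, hleast, fun _ hw₁ => IsLeast.unique hw₁ hleast⟩

theorem mequiv_exists_unique_lex_min {A : Type*} [LinearOrder A] (I : A → A → Prop)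
    (hsymm : ∀ a b, I a b → I b a)
    (w : List A) :
    ∃ w₀ : List A, (MEquiv I w w₀ ∧ ∀ w', MEquiv I w w' → w₀ ≤ w') ∧
      ∀ w₁ : List A, (MEquiv I w w₁ ∧ ∀ w', MEquiv I w w' → w₁ ≤ w') → w₁ = w₀ :=
  mequiv_exists_unique_lex_min_general I w
end

section
/- Let A be a type equipped with a 'channel' labelling chan : A → C into a type C, and suppose the independence relation is exactly inter-channel: I a b holds if and only if chan a ≠ chan b. Let ≡ be the Mazurkiewicz equivalence generated by swapping adjacent independent letters. Then for any word w and any finite list of pairwise distinct channels c₁, …, cₙ containing all channels occurring in w, w is ≡-equivalent to the concatenation (w↾c₁) ++ (w↾c₂) ++ ⋯ ++ (w↾cₙ), where w↾c denotes the sublist of w consisting of the letters with channel c, in their original order. -/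
namespace MEquiv

variable {A : Type*} {I : A → A → Prop}

theorem cons {w w' : List A} (x : A) (h : MEquiv I w w') : MEquiv I (x :: w) (x :: w') := by
  induction h with
  | refl w => exact .refl _
  | symm _ ih => exact ih.symm
  | trans _ _ ih₁ ih₂ => exact ih₁.trans ih₂
  | swap u v a b hab => exact .swap (x :: u) v a b hab

theorem append_left {w w' : List A} (u : List A) (h : MEquiv I w w') :
    MEquiv I (u ++ w) (u ++ w') := by
  induction u with
  | nil => exact h
  | cons x u ih => exact ih.cons x

theorem cons_append_of_forall_indep {a : A} {f : List A} (g : List A) (ha : ∀ b ∈ f, I a b) :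
    MEquiv I (a :: (f ++ g)) (f ++ a :: g) := by
  induction f with
  | nil => exact .refl _
  | cons b f ih =>
    have hswap : MEquiv I (a :: b :: (f ++ g)) (b :: a :: (f ++ g)) :=
      .swap [] (f ++ g) a b (ha b List.mem_cons_self)
    exact hswap.trans ((ih fun b hb => ha b (List.mem_cons_of_mem _ hb)).cons b)

theorem filter_append_filter_not (p : A → Bool)
    (hp : ∀ a b, p a = false → p b = true → I a b) (w : List A) :
    MEquiv I w (w.filter p ++ w.filter (fun a => !p a)) := by
  induction w with
  | nil => exact .refl _
  | cons a w ih =>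
    cases ha : p a
    · have hbubble : MEquiv I (a :: (w.filter p ++ w.filter (fun a => !p a)))
          (w.filter p ++ a :: w.filter (fun a => !p a)) :=
        cons_append_of_forall_indep _ fun b hb => hp a b ha (List.of_mem_filter hb)
      simpa [List.filter_cons, ha] using (ih.cons a).trans hbubble
    · simpa [List.filter_cons, ha] using ih.cons a

end MEquiv

theorem mequiv_channel_decomposition {A C : Type*} [DecidableEq C]
    (chan : A → C) (I : A → A → Prop)
    (hI : ∀ a b : A, I a b ↔ chan a ≠ chan b)
    (w : List A) (cs : List C) (hnd : cs.Nodup)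
    (hcover : ∀ a ∈ w, chan a ∈ cs) :
    MEquiv I w ((cs.map (fun c => w.filter (fun a => decide (chan a = c)))).flatten) := by
  induction cs generalizing w with
  | nil =>
    obtain rfl : w = [] := List.eq_nil_iff_forall_not_mem.2 fun a ha => by simpa using hcover a ha
    exact .refl []
  | cons c cs ih =>
    obtain ⟨hc, hnd⟩ := List.nodup_cons.1 hnd
    set rest := w.filter (fun a => !decide (chan a = c))
    have hrest : ∀ a ∈ rest, chan a ∈ cs := fun a ha => by
      obtain ⟨haw, hac⟩ := List.mem_filter.1 ha
      exact (List.mem_cons.1 (hcover a haw)).resolve_left (by simpa using hac)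
    have hfilter : ∀ c' ∈ cs, rest.filter (fun a => decide (chan a = c')) =
        w.filter (fun a => decide (chan a = c')) := fun c' hc' => by
      rw [List.filter_filter]
      refine List.filter_congr fun a _ => ?_
      by_cases h : chan a = c' <;> simp [h, ne_of_mem_of_not_mem hc' hc]
    have hsplit := MEquiv.filter_append_filter_not (fun a => decide (chan a = c))
      (fun a b ha hb => (hI a b).2 (by simpa [of_decide_eq_true hb] using ha)) w
    simpa [List.map_congr_left hfilter] using hsplit.trans ((ih rest hnd hrest).append_left _)
end

section
/- Let C be a linearly ordered type of channels and w = [c₁, …, cₙ] a list of (not necessarily distinct) channels. For a prefix p = [c₁, …, c_{m}] and a channel c, say Dep(p, c) is nonempty iff there exists k ≤ m with c < c_k and c_i < c for all i with k < i ≤ m. Then the following are equivalent: (1) for every j with 1 ≤ j ≤ n, Dep([c₁,…,c_{j−1}], cⱼ) is empty; (2) the list w is sorted in nondecreasing order. -/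
def DepNonempty {C : Type*} [LinearOrder C] (p : List C) (c : C) : Prop :=
  ∃ (k : ℕ) (hk : k < p.length), c < p.get ⟨k, hk⟩ ∧
    ∀ (i : ℕ) (hik : k < i) (hi : i < p.length), p.get ⟨i, hi⟩ < c

theorem List.getLast_take_succ {α : Type*} (l : List α) {i : ℕ} (hi : i < l.length) :
    (l.take (i + 1)).getLast (by simp [List.ne_nil_iff_length_pos]; omega) = l[i] := by
  simp [List.getLast_take, hi]

theorem List.getElem_mem_drop {α : Type*} (l : List α) {i : ℕ} (hi : i < l.length) :
    l[i] ∈ l.drop i :=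
  List.mem_drop_iff_getElem.mpr ⟨0, by simpa using hi, rfl⟩

section
variable {C : Type*} [LinearOrder C] {p : List C} {c : C}

/-- The last position is a witness: there are no later positions to check. -/
theorem depNonempty_of_lt_getLast (hp : p ≠ []) (h : c < p.getLast hp) : DepNonempty p c := by
  have hlen : p.length - 1 < p.length := by simpa [Nat.sub_lt_iff_lt_add, List.length_pos_iff]
  exact ⟨p.length - 1, hlen, by simpa [List.getLast_eq_getElem] using h,
    fun _ _ hi => by omega⟩

theorem not_depNonempty_of_forall_le (h : ∀ x ∈ p, x ≤ c) : ¬ DepNonempty p c := by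
  rintro ⟨k, hk, hlt, -⟩
  exact (h _ (List.get_mem p ⟨k, hk⟩)).not_gt hlt

end

theorem dep_empty_iff_sorted {C : Type*} [LinearOrder C] (w : List C) :
    (∀ (j : ℕ) (hj : j < w.length), ¬ DepNonempty (w.take j) (w.get ⟨j, hj⟩)) ↔
      List.Pairwise (· ≤ ·) w := by
  constructor
  · intro hdep
    rw [← List.isChain_iff_pairwise, List.isChain_iff_getElem]
    intro i hi
    by_contra! hdesc
    have hne : w.take (i + 1) ≠ [] := List.ne_nil_of_length_pos (by simp; omega)
    refine hdep (i + 1) hi (depNonempty_of_lt_getLast hne ?_)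
    rwa [List.getLast_take_succ w (by omega)]
  · intro hsorted j hj
    exact not_depNonempty_of_forall_le fun x hx =>
      hsorted.rel_of_mem_take_of_mem_drop hx (w.getElem_mem_drop hj)
end
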